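/- Let (u_ε)_{ε>0} be maps Ω → ℝ³ such that for each ε there are c_ε, d_ε ∈ ℝ³ with u_ε(x) = c_ε×x + d_ε for all x ∈ εE¹, and suppose ∫_{εE¹} |u_ε − u₁|² dx → 0 as ε→0 for some u₁ ∈ L²(Ω;ℝ³). Then u₁ is a rigid displacement: there exist c, d ∈ ℝ³ such that u₁(x) = c×x + d for a.e. x ∈ Ω. -/

import Mathlib

open MeasureTheory Real Filter Topology

noncomputable section

/-- The cross product on `ℝ³`. -/
def cross3 (a b : EuclideanSpace ℝ (Fin 3)) : EuclideanSpace ℝ (Fin 3) :=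
  WithLp.toLp 2 ![a 1 * b 2 - a 2 * b 1, a 2 * b 0 - a 0 * b 2, a 0 * b 1 - a 1 * b 0]

/-- The symmetric product `v ⊙ ν = ½(vνᵀ + νvᵀ)` of two vectors in `ℝ³`. -/
def symProd (v w : EuclideanSpace ℝ (Fin 3)) : Matrix (Fin 3) (Fin 3) ℝ :=
  fun i j => (v i * w j + w i * v j) / 2

/-- The squared Frobenius norm of a `3×3` matrix. -/
def frobSq (M : Matrix (Fin 3) (Fin 3) ℝ) : ℝ := ∑ i, ∑ j, (M i j) ^ 2

/-- The projection `ℝ³ → ℝ²` on the first two coordinates. -/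
def proj2 (x : EuclideanSpace ℝ (Fin 3)) : EuclideanSpace ℝ (Fin 2) := WithLp.toLp 2 ![x 0, x 1]

/-- The cylindrical domain `Ω = ω × (0,1) ⊂ ℝ³`. -/
def cylDomain (ω : Set (EuclideanSpace ℝ (Fin 2))) : Set (EuclideanSpace ℝ (Fin 3)) :=
  {x | proj2 x ∈ ω ∧ x 2 ∈ Set.Ioo (0 : ℝ) 1}

/-- The center `x_i = (εi₁ + ε/2, εi₂ + ε/2)` of the `i`-th disk. -/
def ctr (ε : ℝ) (i : ℤ × ℤ) : EuclideanSpace ℝ (Fin 2) :=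
  WithLp.toLp 2 ![ε * i.1 + ε / 2, ε * i.2 + ε / 2]

/-- The open cylinder `εE_i² = εD_i × (0,1)`, with `εD_i` the open disk of center `x_i`
and radius `ε/4`. -/
def cylE (ε : ℝ) (i : ℤ × ℤ) : Set (EuclideanSpace ℝ (Fin 3)) :=
  {x | proj2 x ∈ Metric.ball (ctr ε i) (ε / 4) ∧ x 2 ∈ Set.Ioo (0 : ℝ) 1}

/-- The lateral boundary `∂(εD_i) × (0,1)` of the `i`-th cylinder. -/
def latE (ε : ℝ) (i : ℤ × ℤ) : Set (EuclideanSpace ℝ (Fin 3)) :=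
  {x | proj2 x ∈ Metric.sphere (ctr ε i) (ε / 4) ∧ x 2 ∈ Set.Ioo (0 : ℝ) 1}

/-- The index set `I_ε = {i ∈ ℤ² : εE_i² ⊂ Ω}`. -/
def idx (ω : Set (EuclideanSpace ℝ (Fin 2))) (ε : ℝ) : Set (ℤ × ℤ) :=
  {i | cylE ε i ⊆ cylDomain ω}

/-- `εE² = ⋃_{i ∈ I_ε} εE_i²`. -/
def Etwo (ω : Set (EuclideanSpace ℝ (Fin 2))) (ε : ℝ) : Set (EuclideanSpace ℝ (Fin 3)) :=
  ⋃ i ∈ idx ω ε, cylE ε i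

/-- `εE¹ = Ω ∖ εE²`. -/
def Eone (ω : Set (EuclideanSpace ℝ (Fin 2))) (ε : ℝ) : Set (EuclideanSpace ℝ (Fin 3)) :=
  cylDomain ω \ Etwo ω ε

/-- The horizontal outward unit normal on the lateral boundary of the `i`-th cylinder. -/
def νlat (ε : ℝ) (i : ℤ × ℤ) (x : EuclideanSpace ℝ (Fin 3)) : EuclideanSpace ℝ (Fin 3) :=
  WithLp.toLp 2 ![(x 0 - ctr ε i 0) / ‖proj2 x - ctr ε i‖, (x 1 - ctr ε i 1) / ‖proj2 x - ctr ε i‖, 0]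

/-- The lateral surface energy `∫_{∂(εD_i)×(0,1)} |(α×x+β) ⊙ ν(x)|² d𝓗²` of the rigid
displacement `x ↦ α×x+β` on the `i`-th cylinder. -/
def latEnergy (ε : ℝ) (i : ℤ × ℤ) (α β : EuclideanSpace ℝ (Fin 3)) : ℝ :=
  ∫ x in latE ε i, frobSq (symProd (cross3 α x + β) (νlat ε i x)) ∂(μH[2])

end

/-! The `ε/12`-thickened disk pattern meets any planar set `D` in at most `3/4` of the area of
the `ε`-thickening of `D`: the disks of radius `5ε/12` have `(5/6)² < 3/4` of the area of the
disjoint disks of radius `ε/2` around the lattice points. As the thickenings of a closed bounded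
set shrink to it, intersecting along a well-chosen sequence of scales makes `⋂ₙ εₙE²` null, so
`Ω` is covered up to a null set by the `εₙE¹`: a nonnegative function whose integrals over `εE¹`
tend to `0` vanishes a.e. on `Ω`.

With `vₙ = (c_{εₙ}, d_{εₙ})`, this first shows that the `vₙ` are bounded: otherwise the
normalized coefficients accumulate at a unit vector `w` whose rigid displacement vanishes a.e.
on the open set `Ω`, forcing `w = 0`. A subsequence `vₙ → v₀` then gives
`∫_{εₙE¹} |v₀.1 × x + v₀.2 − u₁|² → 0`, hence `u₁ = v₀.1 × x + v₀.2` a.e. on `Ω`. -/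

open Set Metric Bornology
open scoped ENNReal

local notation "E₂" => EuclideanSpace ℝ (Fin 2)
local notation "E₃" => EuclideanSpace ℝ (Fin 3)

lemma norm_cross3_le (a b : E₃) : ‖cross3 a b‖ ≤ ‖a‖ * ‖b‖ := by
  refine le_of_sq_le_sq ?_ (by positivity)
  simp only [mul_pow, EuclideanSpace.norm_sq_eq, Fin.sum_univ_three, Real.norm_eq_abs, sq_abs]
  simp only [cross3, PiLp.toLp_apply, Matrix.cons_val]
  nlinarith [sq_nonneg (a 0 * b 0 + a 1 * b 1 + a 2 * b 2)]

def rigidDisp (v : E₃ × E₃) (x : E₃) : E₃ := cross3 v.1 x + v.2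

lemma rigidDisp_sub (v w : E₃ × E₃) (x : E₃) :
    rigidDisp (v - w) x = rigidDisp v x - rigidDisp w x := by
  ext i; fin_cases i <;> simp [rigidDisp, cross3] <;> ring

lemma rigidDisp_smul (t : ℝ) (v : E₃ × E₃) (x : E₃) :
    rigidDisp (t • v) x = t • rigidDisp v x := by
  ext i; fin_cases i <;> simp [rigidDisp, cross3] <;> ring

lemma rigidDisp_add_right (v : E₃ × E₃) (x y : E₃) :
    rigidDisp v (x + y) = rigidDisp v x + cross3 v.1 y := by
  ext i; fin_cases i <;> simp [rigidDisp, cross3] <;> ring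

lemma continuous_rigidDisp (v : E₃ × E₃) : Continuous (rigidDisp v) := by
  unfold rigidDisp cross3
  fun_prop

lemma norm_rigidDisp_le (v : E₃ × E₃) (x : E₃) : ‖rigidDisp v x‖ ≤ (‖x‖ + 1) * ‖v‖ :=
  calc ‖rigidDisp v x‖ ≤ ‖v.1‖ * ‖x‖ + ‖v.2‖ :=
        (norm_add_le _ _).trans (by gcongr; exact norm_cross3_le _ _)
    _ ≤ ‖v‖ * ‖x‖ + ‖v‖ := by gcongr; exacts [norm_fst_le v, norm_snd_le v]
    _ = (‖x‖ + 1) * ‖v‖ := by ring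

lemma eq_zero_of_cross3_single_eq_zero {a : E₃} {t : ℝ} (ht : t ≠ 0)
    (h : ∀ j, cross3 a (EuclideanSpace.single j t) = 0) : a = 0 := by
  have h0 := congrArg (· 1) (h 0)
  have h0' := congrArg (· 2) (h 0)
  have h1 := congrArg (· 2) (h 1)
  simp [cross3, ht] at h0 h0' h1
  ext i; fin_cases i <;> simp [*]

lemma eq_zero_of_rigidDisp_ae_eq_zero {U : Set E₃} (hU : IsOpen U) (hne : U.Nonempty)
    {v : E₃ × E₃} (h : rigidDisp v =ᵐ[volume.restrict U] 0) : v = 0 := by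
  have hU0 : EqOn (rigidDisp v) 0 U :=
    Measure.eqOn_open_of_ae_eq h hU (continuous_rigidDisp v).continuousOn continuousOn_const
  obtain ⟨x₀, hx₀⟩ := hne
  obtain ⟨ρ, hρ, hball⟩ := Metric.isOpen_iff.mp hU x₀ hx₀
  have hx₀' : rigidDisp v x₀ = 0 := hU0 hx₀
  have h1 : v.1 = 0 := by
    refine eq_zero_of_cross3_single_eq_zero (half_pos hρ).ne' fun j => ?_
    have hmem : x₀ + EuclideanSpace.single j (ρ / 2) ∈ ball x₀ ρ := by
      simp [abs_of_pos hρ, hρ]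
    simpa [rigidDisp_add_right, hx₀'] using hU0 (hball hmem)
  have h2 : v.2 = 0 := by
    rw [← hx₀', rigidDisp, h1]
    ext i; fin_cases i <;> simp [cross3]
  exact Prod.ext h1 h2

lemma integral_norm_add_sq_le {α E : Type*} [MeasurableSpace α] {μ : Measure α}
    [NormedAddCommGroup E] {f g : α → E} (hf : MemLp f 2 μ) (hg : MemLp g 2 μ) :
    ∫ x, ‖f x + g x‖ ^ 2 ∂μ ≤ 2 * ∫ x, ‖f x‖ ^ 2 ∂μ + 2 * ∫ x, ‖g x‖ ^ 2 ∂μ := by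
  have hf2 := hf.norm.integrable_sq
  have hg2 := hg.norm.integrable_sq
  rw [← integral_const_mul, ← integral_const_mul,
    ← integral_add (hf2.const_mul 2) (hg2.const_mul 2)]
  refine integral_mono_of_nonneg (.of_forall fun x => by positivity)
    ((hf2.const_mul 2).add (hg2.const_mul 2)) (.of_forall fun x => ?_)
  calc ‖f x + g x‖ ^ 2 ≤ (‖f x‖ + ‖g x‖) ^ 2 := by gcongr; exact norm_add_le _ _
    _ ≤ 2 * ‖f x‖ ^ 2 + 2 * ‖g x‖ ^ 2 := by nlinarith [sq_nonneg (‖f x‖ - ‖g x‖)]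

lemma memLp_rigidDisp {U : Set E₃} (hU : IsBounded U) (v : E₃ × E₃) :
    MemLp (rigidDisp v) 2 (volume.restrict U) := by
  obtain ⟨R, hR⟩ := hU.subset_closedBall 0
  have : IsFiniteMeasure (volume.restrict (closedBall (0 : E₃) R)) :=
    isFiniteMeasure_restrict.2 measure_closedBall_lt_top.ne
  have hbound : ∀ᵐ x ∂volume.restrict (closedBall (0 : E₃) R),
      ‖rigidDisp v x‖ ≤ (R + 1) * ‖v‖ := by
    filter_upwards [ae_restrict_mem measurableSet_closedBall] with x hx
    exact (norm_rigidDisp_le v x).trans (by gcongr; simpa using hx)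
  exact (MemLp.of_bound (continuous_rigidDisp v).aestronglyMeasurable _ hbound).mono_measure
    (Measure.restrict_mono hR le_rfl)

lemma integral_norm_rigidDisp_sq_le {U S : Set E₃} {R : ℝ} (hR : U ⊆ closedBall 0 R)
    (hS : S ⊆ U) (v : E₃ × E₃) :
    ∫ x in S, ‖rigidDisp v x‖ ^ 2 ≤ ((R + 1) * ‖v‖) ^ 2 * volume.real U := by
  have hU : volume U < ⊤ := (measure_mono hR).trans_lt measure_closedBall_lt_top
  refine (Real.le_norm_self _).trans ((norm_setIntegral_le_of_norm_le_const
    (C := ((R + 1) * ‖v‖) ^ 2) ((measure_mono hS).trans_lt hU) fun x hx => ?_).trans ?_)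
  · rw [norm_pow, norm_norm]
    have hx : ‖x‖ ≤ R := by simpa using hR (hS hx)
    gcongr
    exact (norm_rigidDisp_le v x).trans (by gcongr)
  · gcongr
    exact hU.ne

lemma tendsto_integral_norm_rigidDisp_sub_sq {U : Set E₃} (hU : IsBounded U) {S : ℕ → Set E₃}
    (hS : ∀ k, S k ⊆ U) {F : E₃ → E₃} (hF : MemLp F 2 (volume.restrict U))
    {v : ℕ → E₃ × E₃} {v₀ : E₃ × E₃} (hv : Tendsto v atTop (𝓝 v₀))
    (h : Tendsto (fun k => ∫ x in S k, ‖rigidDisp (v k) x - F x‖ ^ 2) atTop (𝓝 0)) :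
    Tendsto (fun k => ∫ x in S k, ‖rigidDisp v₀ x - F x‖ ^ 2) atTop (𝓝 0) := by
  obtain ⟨R, hR⟩ := hU.subset_closedBall 0
  have hrestr : ∀ k, volume.restrict (S k) ≤ volume.restrict U := fun k =>
    Measure.restrict_mono (hS k) le_rfl
  have hupper : ∀ k, ∫ x in S k, ‖rigidDisp v₀ x - F x‖ ^ 2 ≤
      2 * (((R + 1) * ‖v₀ - v k‖) ^ 2 * volume.real U) +
        2 * ∫ x in S k, ‖rigidDisp (v k) x - F x‖ ^ 2 := fun k =>
    calc ∫ x in S k, ‖rigidDisp v₀ x - F x‖ ^ 2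
        = ∫ x in S k, ‖rigidDisp (v₀ - v k) x + (rigidDisp (v k) x - F x)‖ ^ 2 := by
          simp [rigidDisp_sub]
      _ ≤ _ := integral_norm_add_sq_le ((memLp_rigidDisp hU _).mono_measure (hrestr k))
          (((memLp_rigidDisp hU _).sub hF).mono_measure (hrestr k))
      _ ≤ _ := by gcongr; exact integral_norm_rigidDisp_sq_le hR (hS k) _
  refine squeeze_zero (fun k => integral_nonneg fun x => by positivity) hupper ?_
  have hdist : Tendsto (fun k => ‖v₀ - v k‖) atTop (𝓝 0) := by
    simpa using (tendsto_const_nhds (x := v₀)).sub hv |>.norm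
  simpa using ((((hdist.const_mul (R + 1)).pow 2).mul_const _).const_mul 2).add (h.const_mul 2)

lemma exists_eventually_integral_norm_rigidDisp_sq_le {U : Set E₃} (hU : IsBounded U)
    {S : ℕ → Set E₃} (hS : ∀ k, S k ⊆ U) {F : E₃ → E₃} (hF : MemLp F 2 (volume.restrict U))
    {v : ℕ → E₃ × E₃}
    (h : Tendsto (fun k => ∫ x in S k, ‖rigidDisp (v k) x - F x‖ ^ 2) atTop (𝓝 0)) :
    ∃ M, ∀ᶠ k in atTop, ∫ x in S k, ‖rigidDisp (v k) x‖ ^ 2 ≤ M := by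
  refine ⟨2 + 2 * ∫ x in U, ‖F x‖ ^ 2, ?_⟩
  filter_upwards [h.eventually (Iic_mem_nhds one_pos)] with k hk
  have hrestr : volume.restrict (S k) ≤ volume.restrict U := Measure.restrict_mono (hS k) le_rfl
  have hFS : ∫ x in S k, ‖F x‖ ^ 2 ≤ ∫ x in U, ‖F x‖ ^ 2 :=
    setIntegral_mono_set hF.norm.integrable_sq (.of_forall fun x => by positivity)
      (hS k).eventuallyLE
  calc ∫ x in S k, ‖rigidDisp (v k) x‖ ^ 2
      = ∫ x in S k, ‖(rigidDisp (v k) x - F x) + F x‖ ^ 2 := by simp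
    _ ≤ 2 * (∫ x in S k, ‖rigidDisp (v k) x - F x‖ ^ 2) + 2 * ∫ x in S k, ‖F x‖ ^ 2 :=
        integral_norm_add_sq_le (f := fun x => rigidDisp (v k) x - F x)
          (((memLp_rigidDisp hU _).sub hF).mono_measure hrestr) (hF.mono_measure hrestr)
    _ ≤ _ := by linarith

def diskPattern (ε : ℝ) : Set E₂ := ⋃ i : ℤ × ℤ, ball (ctr ε i) (ε / 4)

lemma le_dist_ctr {ε : ℝ} (hε : 0 < ε) {i j : ℤ × ℤ} (hij : i ≠ j) :
    ε ≤ dist (ctr ε i) (ctr ε j) := by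
  have key : ∀ (k : Fin 2) (a b : ℤ), a ≠ b → ctr ε i k = ε * a + ε / 2 →
      ctr ε j k = ε * b + ε / 2 → ε ≤ dist (ctr ε i) (ctr ε j) := by
    intro k a b hab hi hj
    refine le_trans ?_ (PiLp.dist_apply_le _ _ k)
    rw [Real.dist_eq, hi, hj, show ε * a + ε / 2 - (ε * b + ε / 2) = ε * (a - b) by ring,
      abs_mul, abs_of_pos hε]
    have : (1 : ℝ) ≤ |(a : ℝ) - b| := by exact_mod_cast Int.one_le_abs (sub_ne_zero.2 hab)
    nlinarith
  by_cases h : i.1 = j.1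
  · exact key 1 i.2 j.2 (fun h' => hij (Prod.ext h h')) rfl rfl
  · exact key 0 i.1 j.1 h rfl rfl

lemma volume_cthickening_diskPattern_inter_le {ε : ℝ} (hε : 0 < ε) (C : Set E₂) :
    volume (cthickening (ε / 12) (diskPattern ε) ∩ C) ≤
      ENNReal.ofReal (3 / 4) * volume (thickening ε C) := by
  set J : Set (ℤ × ℤ) := {i | (ball (ctr ε i) (5 * ε / 12) ∩ C).Nonempty}
  have hcover : cthickening (ε / 12) (diskPattern ε) ∩ C ⊆
      ⋃ i ∈ J, ball (ctr ε i) (5 * ε / 12) := by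
    rintro y ⟨hy, hyC⟩
    have hy' : y ∈ thickening (ε / 6) (diskPattern ε) :=
      cthickening_subset_thickening' (by positivity) (by linarith) _ hy
    rw [diskPattern, thickening_iUnion, mem_iUnion] at hy'
    obtain ⟨i, hi⟩ := hy'
    have hyi : y ∈ ball (ctr ε i) (5 * ε / 12) := by
      convert thickening_ball _ _ _ hi using 2
      ring
    exact mem_biUnion ⟨y, hyi, hyC⟩ hyi
  have hball : ∀ i, volume (ball (ctr ε i) (5 * ε / 12)) ≤
      ENNReal.ofReal (3 / 4) * volume (ball (ctr ε i) (ε / 2)) := by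
    intro i
    rw [show 5 * ε / 12 = 5 / 6 * (ε / 2) by ring, Measure.addHaar_ball_mul _ _ (by norm_num),
      Measure.addHaar_ball_center volume (ctr ε i), finrank_euclideanSpace_fin]
    gcongr
    norm_num
  have hdisj : J.PairwiseDisjoint fun i => ball (ctr ε i) (ε / 2) := fun i _ j _ hij =>
    ball_disjoint_ball (by linarith [le_dist_ctr hε hij])
  have hcells : ⋃ i ∈ J, ball (ctr ε i) (ε / 2) ⊆ thickening ε C := by
    simp only [iUnion_subset_iff]
    rintro i ⟨z, hz, hzC⟩ y hy
    rw [mem_thickening_iff]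
    exact ⟨z, hzC, by linarith [dist_triangle_right y z (ctr ε i), mem_ball.1 hy, mem_ball.1 hz]⟩
  calc volume (cthickening (ε / 12) (diskPattern ε) ∩ C)
      ≤ ∑' i : J, volume (ball (ctr ε i) (5 * ε / 12)) :=
        (measure_mono hcover).trans (measure_biUnion_le _ J.to_countable _)
    _ ≤ ∑' i : J, ENNReal.ofReal (3 / 4) * volume (ball (ctr ε i) (ε / 2)) :=
        ENNReal.tsum_le_tsum fun i => hball i
    _ = ENNReal.ofReal (3 / 4) * volume (⋃ i ∈ J, ball (ctr ε i) (ε / 2)) := by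
        rw [ENNReal.tsum_mul_left,
          measure_biUnion J.to_countable hdisj fun _ _ => measurableSet_ball]
    _ ≤ _ := by gcongr

lemma tendsto_zero_of_le_three_quarters_mul {a : ℕ → ℝ} (ha : ∀ n, 0 ≤ a n)
    (h : ∀ n, a (n + 1) ≤ 3 / 4 * (a n + (1 / 2) ^ n)) : Tendsto a atTop (𝓝 0) := by
  -- `a n + 3 (1/2)^n` shrinks by the factor `3/4` at each step.
  have key : ∀ n, a n + 3 * (1 / 2) ^ n ≤ (3 / 4) ^ n * (a 0 + 3) := by
    intro n
    induction n with
    | zero => simp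
    | succ n ih => rw [pow_succ, pow_succ]; nlinarith [h n]
  refine squeeze_zero (g := fun n => (3 / 4) ^ n * (a 0 + 3)) ha
    (fun n => by linarith [key n, pow_nonneg (by norm_num : (0 : ℝ) ≤ 1 / 2) n]) ?_
  simpa using (tendsto_pow_atTop_nhds_zero_of_lt_one (by norm_num : (0 : ℝ) ≤ 3 / 4)
    (by norm_num)).mul_const (a 0 + 3)

lemma exists_volume_inter_iInter_diskPattern_eq_zero {ε : ℕ → ℝ}
    (hε : Tendsto ε atTop (𝓝[>] 0)) {Q : ℕ → ℕ → Prop} (hQ : ∀ n, ∀ᶠ k in atTop, Q n k)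
    {C : Set E₂} (hC : IsBounded C) :
    ∃ κ : ℕ → ℕ, (∀ n, Q n (κ n)) ∧ volume (C ∩ ⋂ n, diskPattern (ε (κ n))) = 0 := by
  have step : ∀ n (D : {D : Set E₂ // IsClosed D ∧ IsBounded D}), ∃ k, Q n k ∧ 0 < ε k ∧
      volume (thickening (ε k) D.1) ≤ volume D.1 + ENNReal.ofReal ((1 / 2) ^ n) := by
    rintro n ⟨D, hDc, hDb⟩
    have hthick := (tendsto_measure_thickening_of_isClosed (μ := volume)
      ⟨1, one_pos, hDb.thickening.measure_lt_top.ne⟩ hDc).eventually_lt_const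
      (ENNReal.lt_add_right hDb.measure_lt_top.ne
        (ENNReal.ofReal_pos.2 (pow_pos one_half_pos n)).ne')
    obtain ⟨k, hQk, hk⟩ := ((hQ n).and (hε.eventually (hthick.and self_mem_nhdsWithin))).exists
    exact ⟨k, hQk, hk.2, hk.1.le⟩
  choose next hQnext hpos hthick using step
  -- Keeping `D n` closed is what makes `volume (thickening r (D n)) → volume (D n)` as `r → 0`.
  let D : ℕ → {D : Set E₂ // IsClosed D ∧ IsBounded D} := fun n =>
    Nat.rec ⟨closure C, isClosed_closure, hC.closure⟩
      (fun n D => ⟨cthickening (ε (next n D) / 12) (diskPattern (ε (next n D))) ∩ D.1,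
        isClosed_cthickening.inter D.2.1, D.2.2.subset inter_subset_right⟩) n
  refine ⟨fun n => next n (D n), fun n => hQnext n (D n), ?_⟩
  have hsub : ∀ n, C ∩ ⋂ m, diskPattern (ε (next m (D m))) ⊆ (D n).1 := by
    intro n
    induction n with
    | zero => exact inter_subset_left.trans subset_closure
    | succ n ih => exact fun x hx => ⟨self_subset_cthickening _ (mem_iInter.1 hx.2 n), ih hx⟩
  have hfin : ∀ n, volume (D n).1 ≠ ⊤ := fun n => (D n).2.2.measure_lt_top.ne
  have hrec : ∀ n, volume (D (n + 1)).1 ≤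
      ENNReal.ofReal (3 / 4) * (volume (D n).1 + ENNReal.ofReal ((1 / 2) ^ n)) := fun n =>
    (volume_cthickening_diskPattern_inter_le (hpos n (D n)) _).trans
      (by gcongr; exact hthick n (D n))
  have hlim : Tendsto (fun n => (volume (D n).1).toReal) atTop (𝓝 0) := by
    refine tendsto_zero_of_le_three_quarters_mul (fun n => ENNReal.toReal_nonneg) fun n => ?_
    have := ENNReal.toReal_mono (ENNReal.mul_ne_top ENNReal.ofReal_ne_top
      (ENNReal.add_ne_top.2 ⟨hfin n, ENNReal.ofReal_ne_top⟩)) (hrec n)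
    rwa [ENNReal.toReal_mul, ENNReal.toReal_add (hfin n) ENNReal.ofReal_ne_top,
      ENNReal.toReal_ofReal (by norm_num), ENNReal.toReal_ofReal (by positivity)] at this
  have hle := ge_of_tendsto' hlim fun n => ENNReal.toReal_mono (hfin n) (measure_mono (hsub n))
  exact ((ENNReal.toReal_eq_zero_iff _).1 (le_antisymm hle ENNReal.toReal_nonneg)).resolve_right
    ((measure_mono (hsub 0)).trans_lt (hfin 0).lt_top).ne

lemma continuous_proj2 : Continuous proj2 := by
  unfold proj2
  fun_prop

lemma quasiMeasurePreserving_proj2 : Measure.QuasiMeasurePreserving proj2 := by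
  have h : proj2 = WithLp.toLp 2 ∘ Prod.snd ∘ MeasurableEquiv.piFinSuccAbove (fun _ => ℝ) 2 ∘
      WithLp.ofLp := by
    ext x i
    fin_cases i <;> rfl
  rw [h]
  exact (PiLp.volume_preserving_toLp (Fin 2)).quasiMeasurePreserving.comp
    (Measure.quasiMeasurePreserving_snd.comp
      ((volume_preserving_piFinSuccAbove (fun _ => ℝ) 2).quasiMeasurePreserving.comp
        (PiLp.volume_preserving_ofLp (Fin 3)).quasiMeasurePreserving))

lemma Etwo_subset_preimage_diskPattern (ω : Set E₂) (ε : ℝ) :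
    Etwo ω ε ⊆ proj2 ⁻¹' diskPattern ε := by
  simp only [Etwo, iUnion_subset_iff]
  exact fun i _ x hx => mem_iUnion.2 ⟨i, hx.1⟩

lemma measurableSet_Eone {ω : Set E₂} (hω : MeasurableSet ω) (ε : ℝ) :
    MeasurableSet (Eone ω ε) := by
  have hz : Measurable fun x : E₃ => x 2 := by fun_prop
  refine ((continuous_proj2.measurable hω).inter (hz measurableSet_Ioo)).diff
    (.biUnion (to_countable _) fun i _ => ?_)
  exact (continuous_proj2.measurable measurableSet_ball).inter (hz measurableSet_Ioo)

lemma isOpen_cylDomain {ω : Set E₂} (hω : IsOpen ω) : IsOpen (cylDomain ω) :=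
  (hω.preimage continuous_proj2).inter (isOpen_Ioo.preimage (by fun_prop))

lemma isBounded_cylDomain {ω : Set E₂} (hω : IsBounded ω) : IsBounded (cylDomain ω) := by
  obtain ⟨R, hR⟩ := hω.subset_closedBall 0
  refine (isBounded_closedBall (x := (0 : E₃)) (r := R + 1)).subset fun x hx => ?_
  have h1 : ‖proj2 x‖ ≤ R := by simpa using hR hx.1
  have h2 : ‖x‖ ^ 2 = ‖proj2 x‖ ^ 2 + x 2 ^ 2 := by
    simp [EuclideanSpace.norm_sq_eq, Fin.sum_univ_three, Fin.sum_univ_two, proj2]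
  rw [mem_closedBall_zero_iff]
  nlinarith [hx.2.1, hx.2.2, norm_nonneg (proj2 x), norm_nonneg x]

lemma cylDomain_nonempty {ω : Set E₂} (hω : ω.Nonempty) : (cylDomain ω).Nonempty := by
  obtain ⟨y, hy⟩ := hω
  refine ⟨WithLp.toLp 2 ![y 0, y 1, 1 / 2], ?_, show (0 : ℝ) < 1 / 2 by norm_num,
    show (1 / 2 : ℝ) < 1 by norm_num⟩
  convert hy
  ext i
  fin_cases i <;> rfl

lemma lintegral_cylDomain_eq_zero_of_tendsto {ω : Set E₂} (hω : IsBounded ω) {e : ℕ → ℝ}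
    (he : Tendsto e atTop (𝓝[>] 0)) {g : E₃ → ℝ≥0∞}
    (h : Tendsto (fun k => ∫⁻ x in Eone ω (e k), g x) atTop (𝓝 0)) :
    ∫⁻ x in cylDomain ω, g x = 0 := by
  refine le_antisymm (ENNReal.le_of_forall_pos_le_add fun c hc _ => ?_) bot_le
  obtain ⟨κ, hκ, hnull⟩ := exists_volume_inter_iInter_diskPattern_eq_zero he
    (Q := fun n k => ∫⁻ x in Eone ω (e k), g x ≤ (c : ℝ≥0∞) * 2⁻¹ ^ (n + 1))
    (fun n => h.eventually (Iic_mem_nhds (ENNReal.mul_pos (by simpa using hc.ne') (by simp)))) hω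
  set N := proj2 ⁻¹' (ω ∩ ⋂ n, diskPattern (e (κ n)))
  have hcover : cylDomain ω ⊆ N ∪ ⋃ n, Eone ω (e (κ n)) := by
    intro x hx
    by_cases hx' : ∀ n, x ∈ Etwo ω (e (κ n))
    · exact Or.inl ⟨hx.1, mem_iInter.2 fun n => Etwo_subset_preimage_diskPattern _ _ (hx' n)⟩
    · obtain ⟨n, hn⟩ := not_forall.1 hx'
      exact Or.inr (mem_iUnion.2 ⟨n, hx, hn⟩)
  calc ∫⁻ x in cylDomain ω, g x
      ≤ (∫⁻ x in N, g x) + ∫⁻ x in ⋃ n, Eone ω (e (κ n)), g x :=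
        (lintegral_mono_set hcover).trans (lintegral_union_le _ _ _)
    _ ≤ 0 + ∑' n, (c : ℝ≥0∞) * 2⁻¹ ^ (n + 1) := by
        rw [setLIntegral_measure_zero _ _ (quasiMeasurePreserving_proj2.preimage_null hnull)]
        gcongr
        exact (lintegral_iUnion_le _ _).trans (ENNReal.tsum_le_tsum hκ)
    _ = 0 + (c : ℝ≥0∞) := by
        rw [ENNReal.tsum_mul_left, ENNReal.tsum_geometric_add_one, ENNReal.one_sub_inv_two,
          inv_inv, ENNReal.inv_mul_cancel two_ne_zero ENNReal.ofNat_ne_top, mul_one]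

lemma ae_eq_zero_of_tendsto_integral_Eone {ω : Set E₂} (hω : IsBounded ω) {e : ℕ → ℝ}
    (he : Tendsto e atTop (𝓝[>] 0)) {E : Type*} [NormedAddCommGroup E] {f : E₃ → E}
    (hf : MemLp f 2 (volume.restrict (cylDomain ω)))
    (h : Tendsto (fun k => ∫ x in Eone ω (e k), ‖f x‖ ^ 2) atTop (𝓝 0)) :
    f =ᵐ[volume.restrict (cylDomain ω)] 0 := by
  have hint := hf.norm.integrable_sq
  have hzero : ∫⁻ x in cylDomain ω, ENNReal.ofReal (‖f x‖ ^ 2) = 0 := by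
    refine lintegral_cylDomain_eq_zero_of_tendsto hω he ?_
    have := (ENNReal.continuous_ofReal.tendsto 0).comp h
    rw [ENNReal.ofReal_zero] at this
    refine this.congr fun k => ?_
    exact ofReal_integral_eq_lintegral_ofReal
      (hint.mono_measure (Measure.restrict_mono sdiff_subset le_rfl))
      (.of_forall fun x => by positivity)
  filter_upwards [(lintegral_eq_zero_iff' hint.aemeasurable.ennreal_ofReal).1 hzero] with x hx
  simpa using hx

lemma exists_eventually_norm_le_of_integral_rigidDisp_le {ω : Set E₂} (hω : IsOpen ω)
    (hωb : IsBounded ω) (hne : ω.Nonempty) {e : ℕ → ℝ} (he : Tendsto e atTop (𝓝[>] 0))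
    {v : ℕ → E₃ × E₃} {M : ℝ}
    (hM : ∀ᶠ k in atTop, ∫ x in Eone ω (e k), ‖rigidDisp (v k) x‖ ^ 2 ≤ M) :
    ∃ B, ∀ᶠ k in atTop, ‖v k‖ ≤ B := by
  by_contra! hunb
  obtain ⟨φ, hφ, hφv⟩ :=
    extraction_forall_of_frequently fun n : ℕ => (hunb n).and_eventually hM
  set w : ℕ → E₃ × E₃ := fun n => ‖v (φ n)‖⁻¹ • v (φ n)
  have hw : ∀ n, w n ∈ sphere (0 : E₃ × E₃) 1 := fun n => by
    have : 0 < ‖v (φ n)‖ := (Nat.cast_nonneg n).trans_lt (hφv n).1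
    simp [w, norm_smul, this.ne']
  obtain ⟨w₀, hw₀, ψ, hψ, hlim⟩ := (isCompact_sphere (0 : E₃ × E₃) 1).tendsto_subseq hw
  have hinv : Tendsto (fun n => ‖v (φ n)‖⁻¹) atTop (𝓝 0) :=
    tendsto_inv_atTop_zero.comp
      (tendsto_atTop_mono (fun n => (hφv n).1.le) tendsto_natCast_atTop_atTop)
  have hsmall : Tendsto (fun m => ∫ x in Eone ω (e (φ (ψ m))),
      ‖rigidDisp (w (ψ m)) x - (0 : E₃ → E₃) x‖ ^ 2) atTop (𝓝 0) := by
    refine squeeze_zero (fun m => integral_nonneg fun x => by positivity) (fun m => ?_)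
      (by simpa using ((hinv.comp hψ.tendsto_atTop).pow 2).mul_const M)
    simp only [Pi.zero_apply, sub_zero, w, rigidDisp_smul, norm_smul, mul_pow,
      integral_const_mul, norm_inv, norm_norm, inv_pow]
    gcongr
    exact (hφv _).2
  have hvanish := tendsto_integral_norm_rigidDisp_sub_sq (isBounded_cylDomain hωb)
    (S := fun m => Eone ω (e (φ (ψ m)))) (fun m => sdiff_subset) MemLp.zero hlim hsmall
  have hae := ae_eq_zero_of_tendsto_integral_Eone hωb (he.comp (hφ.comp hψ).tendsto_atTop)
    (memLp_rigidDisp (isBounded_cylDomain hωb) w₀) (by simpa using hvanish)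
  have := eq_zero_of_rigidDisp_ae_eq_zero (isOpen_cylDomain hω) (cylDomain_nonempty hne) hae
  simp [this] at hw₀

theorem limit_on_matrix_part_is_rigid_general
    (ω : Set (EuclideanSpace ℝ (Fin 2))) (hω : IsOpen ω)
    (hωb : Bornology.IsBounded ω)
    (u : ℝ → EuclideanSpace ℝ (Fin 3) → EuclideanSpace ℝ (Fin 3))
    (c d : ℝ → EuclideanSpace ℝ (Fin 3))
    (hrig : ∀ ε : ℝ, 0 < ε → ∀ x ∈ Eone ω ε, u ε x = cross3 (c ε) x + d ε)
    (u₁ : EuclideanSpace ℝ (Fin 3) → EuclideanSpace ℝ (Fin 3))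
    (hu₁ : MemLp u₁ 2 (volume.restrict (cylDomain ω)))
    (hconv : Tendsto (fun ε : ℝ => ∫ x in Eone ω ε, ‖u ε x - u₁ x‖ ^ 2) (𝓝[>] (0 : ℝ))
      (𝓝 (0 : ℝ))) :
    ∃ c₀ d₀ : EuclideanSpace ℝ (Fin 3),
      ∀ᵐ x ∂(volume.restrict (cylDomain ω)), u₁ x = cross3 c₀ x + d₀ := by
  rcases ω.eq_empty_or_nonempty with rfl | hne
  · exact ⟨0, 0, by simp [cylDomain]⟩
  have hΩ := isBounded_cylDomain hωb
  set e : ℕ → ℝ := fun n => 1 / ((n : ℝ) + 1)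
  have he : Tendsto e atTop (𝓝[>] 0) := tendsto_nhdsWithin_iff.2
    ⟨tendsto_one_div_add_atTop_nhds_zero_nat, .of_forall fun n => mem_Ioi.2 (by positivity)⟩
  set v : ℕ → E₃ × E₃ := fun n => (c (e n), d (e n))
  have hsmall :
      Tendsto (fun n => ∫ x in Eone ω (e n), ‖rigidDisp (v n) x - u₁ x‖ ^ 2) atTop (𝓝 0) :=
    (hconv.comp he).congr fun n => setIntegral_congr_fun (measurableSet_Eone hω.measurableSet _)
      fun x hx => by simp [hrig (e n) (by positivity) x hx, rigidDisp, v]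
  obtain ⟨M, hM⟩ :=
    exists_eventually_integral_norm_rigidDisp_sq_le hΩ (fun n => sdiff_subset) hu₁ hsmall
  obtain ⟨B, hB⟩ := exists_eventually_norm_le_of_integral_rigidDisp_le hω hωb hne he hM
  obtain ⟨v₀, -, φ, hφ, hv₀⟩ := tendsto_subseq_of_frequently_bounded
    (isBounded_closedBall (x := (0 : E₃ × E₃)) (r := B))
    (hB.frequently.mono fun n hn => mem_closedBall_zero_iff.2 hn)
  have hlim := tendsto_integral_norm_rigidDisp_sub_sq hΩ (S := fun k => Eone ω (e (φ k)))
    (fun k => sdiff_subset) hu₁ hv₀ (hsmall.comp hφ.tendsto_atTop)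
  have hae := ae_eq_zero_of_tendsto_integral_Eone hωb (he.comp hφ.tendsto_atTop)
    ((memLp_rigidDisp hΩ v₀).sub hu₁) hlim
  exact ⟨v₀.1, v₀.2, hae.mono fun x hx => (sub_eq_zero.1 hx).symm⟩

/-- If `u_ε = c_ε×x + d_ε` on `εE¹` and `∫_{εE¹}|u_ε − u₁|² dx → 0`
for some `u₁ ∈ L²(Ω;ℝ³)`, then `u₁` is (a.e. equal to) a rigid displacement. -/
theorem limit_on_matrix_part_is_rigid
    (ω : Set (EuclideanSpace ℝ (Fin 2))) (hω : IsOpen ω) (hωconn : IsConnected ω)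
    (hωb : Bornology.IsBounded ω)
    (u : ℝ → EuclideanSpace ℝ (Fin 3) → EuclideanSpace ℝ (Fin 3))
    (c d : ℝ → EuclideanSpace ℝ (Fin 3))
    (hrig : ∀ ε : ℝ, 0 < ε → ∀ x ∈ Eone ω ε, u ε x = cross3 (c ε) x + d ε)
    (u₁ : EuclideanSpace ℝ (Fin 3) → EuclideanSpace ℝ (Fin 3))
    (hu₁ : MemLp u₁ 2 (volume.restrict (cylDomain ω)))
    (hconv : Tendsto (fun ε : ℝ => ∫ x in Eone ω ε, ‖u ε x - u₁ x‖ ^ 2) (𝓝[>] (0 : ℝ))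
      (𝓝 (0 : ℝ))) :
    ∃ c₀ d₀ : EuclideanSpace ℝ (Fin 3),
      ∀ᵐ x ∂(volume.restrict (cylDomain ω)), u₁ x = cross3 c₀ x + d₀ :=
  limit_on_matrix_part_is_rigid_general ω hω hωb u c d hrig u₁ hu₁ hconv
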